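/- Let λ be a partition of m, T a standard Young tableau of shape λ, and n a positive integer. Then, as polynomials in x_1,…,x_n, the sum of x^S over all semistandard Young tableaux S of shape λ with entries in {1,…,n} whose standardization is T equals the sum of x^U over all composition tableaux U of shape comp(Des(T)) with entries in {1,…,n}. (That is, Q_{comp(Des(T))}(x_1,…,x_n) = Σ_{std(S)=T} x^S.) -/

import Mathlib

/-!
STATEMENT 18: Let λ be a partition of m, T a standard Young tableau of shape λ, and n a
positive integer. Then, as polynomials in x_1,…,x_n, the sum of x^S over all semistandard
Young tableaux S of shape λ with entries in {1,…,n} whose standardization is T equals the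
sum of x^U over all composition tableaux U of shape comp(Des(T)) with entries in {1,…,n}.

Conventions: rows/columns and positions are 0-indexed; the entry `e ∈ {1,…,n}` is
represented by `e - 1 : Fin n`, and the variable `x_e` is `MvPolynomial.X (e-1 : Fin n)`.
The function `bx` records, for each `k ∈ {1,…,m}`, the (unique) box of `λ` in which `T` has
entry `k`; `Des(T)` is the set of `k ∈ {1,…,m-1}` whose box has strictly smaller row index
than the box of `k+1`.
-/

open scoped Classical
open MvPolynomial

/-- The boxes of the Young diagram of `lam`. -/
def boxes (lam : List ℕ) : Finset (ℕ × ℕ) :=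
  (Finset.range lam.length ×ˢ Finset.range (lam.foldr max 0)).filter
    (fun p => p.2 < lam.getD p.1 0)

/-- `S` is a semistandard Young tableau of shape the partition `lam`. -/
structure IsSSYT (lam : List ℕ) (S : ℕ × ℕ → ℕ) : Prop where
  pos : ∀ p ∈ boxes lam, 1 ≤ S p
  row_weak : ∀ p ∈ boxes lam, ∀ q ∈ boxes lam, p.1 = q.1 → p.2 ≤ q.2 → S p ≤ S q
  col_strict : ∀ p ∈ boxes lam, ∀ q ∈ boxes lam, p.2 = q.2 → p.1 < q.1 → S p < S q

/-- `T` is a standard Young tableau of shape `lam` with `m` boxes. -/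
def IsSYT (lam : List ℕ) (m : ℕ) (T : ℕ × ℕ → ℕ) : Prop :=
  IsSSYT lam T ∧ ∀ v : ℕ, 1 ≤ v → v ≤ m →
    ((boxes lam).filter (fun p => T p = v)).card = 1

/-- The standardization of a semistandard Young tableau `S` of shape `lam` at a box `p`. -/
def standardization (lam : List ℕ) (S : ℕ × ℕ → ℕ) (p : ℕ × ℕ) : ℕ :=
  ((boxes lam).filter (fun q => S q < S p ∨ (S q = S p ∧ q.2 < p.2))).card + 1

/-- The extension of a `Fin n`-valued filling of the boxes of `lam` to a `ℕ`-valued filling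
(the value `v : Fin n` represents the entry `v + 1`; boxes outside the diagram get `0`). -/
noncomputable def extFill (lam : List ℕ) {n : ℕ} (S : {p // p ∈ boxes lam} → Fin n) :
    ℕ × ℕ → ℕ :=
  fun p => if h : p ∈ boxes lam then (S ⟨p, h⟩ : ℕ) + 1 else 0

/-- Lexicographic order on boxes. -/
def boxLe (p q : ℕ × ℕ) : Prop := p.1 < q.1 ∨ (p.1 = q.1 ∧ p.2 ≤ q.2)

/-- A composition tableau of shape `lam` with entries in `{1,…,n}`. -/
def IsCompTabFn (lam : List ℕ) {n : ℕ} (U : {p // p ∈ boxes lam} → Fin n) : Prop :=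
  (∀ p q : {p // p ∈ boxes lam}, boxLe p.1 q.1 → U p ≤ U q) ∧
  (∀ p q : {p // p ∈ boxes lam}, p.1.1 < q.1.1 → U p < U q)

/-- The composition of `m` corresponding to a subset `D = {i_1 < ⋯ < i_{k-1}}` of
`{1,…,m-1}`: the list `(i_1, i_2 − i_1, …, m − i_{k−1})` of successive differences. -/
def compOfSet (m : ℕ) (D : Finset ℕ) : List ℕ :=
  let l := D.sort (· ≤ ·) ++ [m]
  l.zipWith (fun a b => a - b) (0 :: l)

/-!
Read a semistandard tableau `S` along the entries `1, …, m` of `T`. If `S` standardizes to `T`,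
this word is weakly increasing, and strictly increasing at each descent `k` of `T`: there `k + 1`
sits strictly below `k`, so equal entries would contradict the column-strictness of `S`.
Conversely every such word fills `λ` along `T` to a semistandard tableau standardizing to `T`,
because a run of `T` without descents moves weakly up and strictly right, so equal letters are
numbered from left to right. Reading a composition tableau of shape `comp(Des(T))` row by row
gives exactly the same words, as its rows break precisely at the descents. Both sides are
therefore the generating function of these words.
-/

open Finset

lemma getD_le_foldr_max (l : List ℕ) (i : ℕ) : l.getD i 0 ≤ l.foldr max 0 := by
  induction l generalizing i with
  | nil => simp
  | cons a t ih =>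
    cases i with
    | zero => simp
    | succ j => exact (ih j).trans (le_max_right _ _)

lemma mem_boxes {lam : List ℕ} {p : ℕ × ℕ} :
    p ∈ boxes lam ↔ p.1 < lam.length ∧ p.2 < lam.getD p.1 0 := by
  simp only [boxes, mem_filter, mem_product, mem_range]
  exact ⟨fun h => ⟨h.1.1, h.2⟩,
    fun h => ⟨⟨h.1, h.2.trans_le (getD_le_foldr_max lam p.1)⟩, h.2⟩⟩

lemma sum_range_length_getD (l : List ℕ) : ∑ i ∈ range l.length, l.getD i 0 = l.sum := by
  induction l with
  | nil => simp
  | cons a t ih =>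
    rw [List.length_cons, sum_range_succ', List.sum_cons, ← ih]
    simp [add_comm]

lemma card_boxes (lam : List ℕ) : #(boxes lam) = lam.sum := by
  have hrows : boxes lam = (range lam.length).biUnion fun i => {i} ×ˢ range (lam.getD i 0) := by
    ext ⟨i, j⟩
    simp [mem_boxes]
  rw [hrows, card_biUnion, ← sum_range_length_getD]
  · simp
  · intro i _ j _ hij
    simp only [disjoint_left, mem_product, mem_singleton]
    exact fun p hp hq => hij (hp.1.symm.trans hq.1)

lemma mem_boxes_of_fst_le {lam : List ℕ} (hdec : lam.Pairwise (· ≥ ·)) {q : ℕ × ℕ}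
    (hq : q ∈ boxes lam) {i : ℕ} (hi : i ≤ q.1) : (i, q.2) ∈ boxes lam := by
  rw [mem_boxes] at hq ⊢
  obtain ⟨hq1, hq2⟩ := hq
  have hil : i < lam.length := hi.trans_lt hq1
  refine ⟨hil, ?_⟩
  rw [List.getD_eq_getElem _ _ hq1] at hq2
  rw [List.getD_eq_getElem _ _ hil]
  rcases hi.eq_or_lt with rfl | hlt
  · exact hq2
  · exact hq2.trans_le (hdec.rel_get_of_lt (a := ⟨i, hil⟩) (b := ⟨q.1, hq1⟩) hlt)

namespace IsSSYT

variable {lam : List ℕ} {S : ℕ × ℕ → ℕ} {p q : ℕ × ℕ}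

lemma le_of_le (hdec : lam.Pairwise (· ≥ ·)) (hS : IsSSYT lam S) (hp : p ∈ boxes lam)
    (hq : q ∈ boxes lam) (h1 : p.1 ≤ q.1) (h2 : p.2 ≤ q.2) : S p ≤ S q := by
  have hc := mem_boxes_of_fst_le hdec hq h1
  refine (hS.row_weak p hp _ hc rfl h2).trans ?_
  rcases h1.eq_or_lt with h | h
  · rw [h]
  · exact (hS.col_strict _ hc q hq rfl h).le

lemma lt_of_lt_of_le (hdec : lam.Pairwise (· ≥ ·)) (hS : IsSSYT lam S) (hp : p ∈ boxes lam)
    (hq : q ∈ boxes lam) (h1 : p.1 < q.1) (h2 : p.2 ≤ q.2) : S p < S q := by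
  have hc := mem_boxes_of_fst_le hdec hq h1.le
  exact (hS.row_weak p hp _ hc rfl h2).trans_lt (hS.col_strict _ hc q hq rfl h1)

end IsSSYT

lemma List.getD_zipWith_sub {l l' : List ℕ} (h : l.length ≤ l'.length) (i : ℕ) :
    (List.zipWith (fun a b => a - b) l l').getD i 0 = l.getD i 0 - l'.getD i 0 := by
  rcases lt_or_ge i l.length with hi | hi
  · simp [List.getD_eq_getElem?_getD, hi, hi.trans_le h]
  · simp [List.getD_eq_getElem?_getD, hi]

lemma List.getElem_le_iff_lt_length_filter {L : List ℕ} (hL : L.Pairwise (· < ·)) {k i : ℕ}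
    (hi : i < L.length) : L[i] ≤ k ↔ i < (L.filter (· ≤ k)).length := by
  induction L generalizing i with
  | nil => simp at hi
  | cons a t ih =>
    rw [List.pairwise_cons] at hL
    by_cases hak : a ≤ k
    · rw [List.filter_cons_of_pos (by simpa)]
      cases i with
      | zero => simpa
      | succ j => simpa using ih hL.2 (by simpa using hi)
    · have ht : t.filter (· ≤ k) = [] := List.filter_eq_nil_iff.2 fun b hb => by
        have := hL.1 b hb; simp; omega
      rw [List.filter_cons_of_neg (by simpa using hak), ht]
      cases i with
      | zero => simpa using hak
      | succ j =>
        have := hL.1 _ (List.getElem_mem (l := t) (n := j) (by simpa using hi))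
        simp; omega

lemma Finset.length_filter_sort (D : Finset ℕ) (p : ℕ → Prop) [DecidablePred p] :
    ((D.sort (· ≤ ·)).filter p).length = #(D.filter p) := by
  rw [← Multiset.coe_card, ← Multiset.filter_coe, Finset.sort_eq]
  rfl

section CompositionDiagram

variable {m : ℕ} {D : Finset ℕ}

/-- Row `i` of the diagram of `compOfSet m D` holds the positions
`rowStart m D i ≤ k < rowStart m D (i + 1)` of `{0,…,m-1}`. -/
def rowStart (m : ℕ) (D : Finset ℕ) (i : ℕ) : ℕ := (0 :: (D.sort (· ≤ ·) ++ [m])).getD i 0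

/-- The row of the diagram of `compOfSet m D` holding position `k`. -/
def rowOf (D : Finset ℕ) (k : ℕ) : ℕ := #{d ∈ D | d ≤ k}

lemma rowStart_succ_of_lt {i : ℕ} (hi : i < #D) :
    rowStart m D (i + 1) = (D.sort (· ≤ ·))[i]'(by rwa [Finset.length_sort]) := by
  simp [rowStart, List.getD_eq_getElem?_getD, List.getElem?_append_left, hi]

lemma rowStart_card_succ : rowStart m D (#D + 1) = m := by
  simp [rowStart, List.getD_eq_getElem?_getD]

lemma rowStart_succ_le_of_le (hD : ∀ d ∈ D, d < m) {i : ℕ} (hi : i ≤ #D) :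
    rowStart m D (i + 1) ≤ m := by
  rcases hi.lt_or_eq with hi | rfl
  · rw [rowStart_succ_of_lt hi]
    exact (hD _ ((Finset.mem_sort _).1 (List.getElem_mem _))).le
  · rw [rowStart_card_succ]

lemma mem_boxes_compOfSet {i j : ℕ} :
    (i, j) ∈ boxes (compOfSet m D) ↔ i ≤ #D ∧ rowStart m D i + j < rowStart m D (i + 1) := by
  have hlen : (compOfSet m D).length = #D + 1 := by simp [compOfSet]
  have hget : (compOfSet m D).getD i 0 = rowStart m D (i + 1) - rowStart m D i :=
    List.getD_zipWith_sub (by simp) i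
  rw [mem_boxes, hlen, hget]
  omega

lemma rowOf_le_card (k : ℕ) : rowOf D k ≤ #D := card_filter_le _ _

lemma rowStart_le_iff {i k : ℕ} (hk : k < m) (hi : i ≤ #D + 1) :
    rowStart m D i ≤ k ↔ i ≤ rowOf D k := by
  rcases i with _ | i
  · simp [rowStart]
  rcases (Nat.lt_succ_iff.1 hi).lt_or_eq with hi | rfl
  · rw [rowStart_succ_of_lt hi,
      List.getElem_le_iff_lt_length_filter (Finset.sortedLT_sort D).pairwise,
      Finset.length_filter_sort, rowOf]
    omega
  · rw [rowStart_card_succ]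
    have := rowOf_le_card (D := D) k
    omega

lemma rowStart_rowOf_le {k : ℕ} (hk : k < m) : rowStart m D (rowOf D k) ≤ k :=
  (rowStart_le_iff hk (by have := rowOf_le_card (D := D) k; omega)).2 le_rfl

lemma lt_rowStart_rowOf_succ {k : ℕ} (hk : k < m) : k < rowStart m D (rowOf D k + 1) :=
  not_le.1 fun h => by
    have := (rowStart_le_iff hk (by have := rowOf_le_card (D := D) k; omega)).1 h
    omega

lemma rowOf_eq_of_mem_boxes {i j : ℕ} (hk : rowStart m D i + j < m)
    (h : (i, j) ∈ boxes (compOfSet m D)) : rowOf D (rowStart m D i + j) = i := by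
  rw [mem_boxes_compOfSet] at h
  have h1 := (rowStart_le_iff (D := D) hk (by omega)).1 (Nat.le_add_right _ j)
  have h2 := (rowStart_le_iff (D := D) (i := i + 1) hk (by omega)).not.1 (by omega)
  omega

lemma rowOf_lt_rowOf_iff {a b : ℕ} : rowOf D a < rowOf D b ↔ ∃ d ∈ D, a < d ∧ d ≤ b := by
  constructor
  · intro h
    by_contra! hno
    refine (card_le_card fun d hd => ?_).not_gt h
    rw [mem_filter] at hd ⊢
    exact ⟨hd.1, not_lt.1 fun had => (hno d hd.1 had).not_ge hd.2⟩
  · rintro ⟨d, hd, had, hdb⟩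
    refine card_lt_card ((ssubset_iff_of_subset fun x hx => ?_).2 ⟨d, ?_, ?_⟩)
    · rw [mem_filter] at hx ⊢
      exact ⟨hx.1, by omega⟩
    · exact mem_filter.2 ⟨hd, hdb⟩
    · simp [had]

lemma rowOf_mono {a b : ℕ} (hab : a ≤ b) : rowOf D a ≤ rowOf D b :=
  card_le_card fun d hd => by
    rw [mem_filter] at hd ⊢
    exact ⟨hd.1, hd.2.trans hab⟩

def compBoxEquiv (hD : ∀ d ∈ D, d < m) : Fin m ≃ {p // p ∈ boxes (compOfSet m D)} where
  toFun k := ⟨(rowOf D k, k - rowStart m D (rowOf D k)), by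
    have := rowStart_rowOf_le (D := D) k.isLt
    have := lt_rowStart_rowOf_succ (D := D) k.isLt
    rw [mem_boxes_compOfSet]
    exact ⟨rowOf_le_card _, by omega⟩⟩
  invFun p := ⟨rowStart m D p.1.1 + p.1.2, by
    have h := p.2
    rw [← Prod.mk.eta (p := p.1), mem_boxes_compOfSet] at h
    exact h.2.trans_le (rowStart_succ_le_of_le hD h.1)⟩
  left_inv k := by
    have := rowStart_rowOf_le (D := D) k.isLt
    ext
    simp only
    omega
  right_inv := by
    rintro ⟨⟨i, j⟩, hp⟩
    have hk : rowStart m D i + j < m :=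
      (mem_boxes_compOfSet.1 hp).2.trans_le (rowStart_succ_le_of_le hD (mem_boxes_compOfSet.1 hp).1)
    ext <;> simp [rowOf_eq_of_mem_boxes hk hp]

lemma compBoxEquiv_fst (hD : ∀ d ∈ D, d < m) (k : Fin m) :
    (compBoxEquiv hD k : ℕ × ℕ).1 = rowOf D k := rfl

lemma boxLe_compBoxEquiv_iff (hD : ∀ d ∈ D, d < m) {a b : Fin m} :
    boxLe (compBoxEquiv hD a) (compBoxEquiv hD b) ↔ a ≤ b := by
  have ha := rowStart_rowOf_le (D := D) a.isLt
  have hb := rowStart_rowOf_le (D := D) b.isLt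
  simp only [boxLe, compBoxEquiv, Equiv.coe_fn_mk, Fin.le_def]
  constructor
  · rintro (h | ⟨h, h'⟩)
    · exact not_lt.1 fun hba => (rowOf_mono (D := D) hba.le).not_gt h
    · rw [h] at ha h'
      omega
  · intro hab
    rcases (rowOf_mono (D := D) hab).lt_or_eq with h | h
    · exact Or.inl h
    · exact Or.inr ⟨h, by rw [h]; omega⟩

end CompositionDiagram

-- Positions are `0`-indexed, so a descent `d ∈ D` (between the entries `d` and `d + 1`)
-- separates the positions `d - 1` and `d`.
def IsDescentCompatible {m : ℕ} {α : Type*} [Preorder α] (D : Finset ℕ) (u : Fin m → α) :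
    Prop :=
  Monotone u ∧ ∀ a b : Fin m, ∀ d ∈ D, (a : ℕ) < d → d ≤ (b : ℕ) → u a < u b

section IsDescentCompatible

variable {m : ℕ} {D : Finset ℕ}

lemma isDescentCompatible_comp_iff {α β : Type*} [LinearOrder α] [Preorder β] {φ : α → β}
    (hφ : StrictMono φ) {u : Fin m → α} :
    IsDescentCompatible D (φ ∘ u) ↔ IsDescentCompatible D u := by
  simp only [IsDescentCompatible, Monotone, Function.comp_apply, hφ.le_iff_le, hφ.lt_iff_lt]

lemma isDescentCompatible_succ_iff {α : Type*} [Preorder α] {g : ℕ → α} :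
    IsDescentCompatible D (fun k : Fin m => g (k + 1)) ↔
      (∀ a b, 1 ≤ a → a ≤ b → b ≤ m → g a ≤ g b) ∧
      (∀ a b, 1 ≤ a → b ≤ m → ∀ d ∈ D, a ≤ d → d < b → g a < g b) := by
  have hshift : ∀ a, 1 ≤ a → a - 1 + 1 = a := fun a ha => Nat.sub_add_cancel ha
  constructor
  · rintro ⟨hmono, hstrict⟩
    refine ⟨fun a b ha hab hb => ?_, fun a b ha hb d hd had hdb => ?_⟩
    · have := hmono (a := ⟨a - 1, by omega⟩) (b := ⟨b - 1, by omega⟩)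
        (Fin.le_def.2 (by simp; omega))
      simpa [hshift a ha, hshift b (ha.trans hab)] using this
    · have := hstrict ⟨a - 1, by omega⟩ ⟨b - 1, by omega⟩ d hd (by simp; omega) (by simp; omega)
      simpa [hshift a ha, hshift b (by omega)] using this
  · rintro ⟨hmono, hstrict⟩
    exact ⟨fun a b hab => hmono _ _ (by omega) (by simpa using hab) (by omega),
      fun a b d hd had hdb => hstrict _ _ (by omega) (by omega) d hd (by omega) (by omega)⟩

end IsDescentCompatible

lemma isCompTabFn_iff_isDescentCompatible {m n : ℕ} {D : Finset ℕ} (hD : ∀ d ∈ D, d < m)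
    (U : {p // p ∈ boxes (compOfSet m D)} → Fin n) :
    IsCompTabFn (compOfSet m D) U ↔ IsDescentCompatible D (U ∘ compBoxEquiv hD) := by
  simp only [IsCompTabFn, IsDescentCompatible, (compBoxEquiv hD).surjective.forall, Monotone,
    Function.comp_apply, boxLe_compBoxEquiv_iff, compBoxEquiv_fst, rowOf_lt_rowOf_iff,
    forall_exists_index, and_imp]

def descentSet (m : ℕ) (bx : ℕ → ℕ × ℕ) : Finset ℕ :=
  {k ∈ Ioo 0 m | (bx k).1 < (bx (k + 1)).1}

section StandardTableau

variable {m : ℕ} {lam : List ℕ} {T : ℕ × ℕ → ℕ} {bx : ℕ → ℕ × ℕ}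
  (hdec : lam.Pairwise (· ≥ ·)) (hsum : lam.sum = m) (hT : IsSSYT lam T)
  (hbx : ∀ k, 1 ≤ k → k ≤ m → bx k ∈ boxes lam ∧ T (bx k) = k)

include hbx in
lemma injOn_Icc_of_leftInverse : Set.InjOn bx (Icc 1 m) := fun a ha b hb hab => by
  rw [coe_Icc, Set.mem_Icc] at ha hb
  rw [← (hbx a ha.1 ha.2).2, ← (hbx b hb.1 hb.2).2, hab]

include hsum hbx in
lemma image_Icc_eq_boxes : (Icc 1 m).image bx = boxes lam := by
  refine eq_of_subset_of_card_le (fun p hp => ?_) ?_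
  · obtain ⟨k, hk, rfl⟩ := mem_image.1 hp
    rw [mem_Icc] at hk
    exact (hbx k hk.1 hk.2).1
  · rw [card_boxes, hsum, card_image_of_injOn (injOn_Icc_of_leftInverse hbx), Nat.card_Icc]
    omega

include hsum hbx in
lemma exists_bx_eq {p : ℕ × ℕ} (hp : p ∈ boxes lam) : ∃ k, 1 ≤ k ∧ k ≤ m ∧ bx k = p := by
  rw [← image_Icc_eq_boxes hsum hbx, mem_image] at hp
  obtain ⟨k, hk, rfl⟩ := hp
  exact ⟨k, (mem_Icc.1 hk).1, (mem_Icc.1 hk).2, rfl⟩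

def boxEquiv : Fin m ≃ {p // p ∈ boxes lam} where
  toFun k := ⟨bx (k + 1), (hbx _ (by omega) (by omega)).1⟩
  invFun p := ⟨T p - 1, by
    obtain ⟨k, hk1, hkm, hk⟩ := exists_bx_eq hsum hbx p.2
    rw [← hk, (hbx k hk1 hkm).2]
    omega⟩
  left_inv k := by
    ext
    simp [(hbx (k + 1) (by omega) (by omega)).2]
  right_inv p := by
    obtain ⟨k, hk1, hkm, hk⟩ := exists_bx_eq hsum hbx p.2
    ext1
    simp only [← hk, (hbx k hk1 hkm).2, Nat.sub_add_cancel hk1]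

include hsum hbx in
lemma card_filter_lt_T {p : ℕ × ℕ} (hp : p ∈ boxes lam) :
    #{x ∈ boxes lam | T x < T p} = T p - 1 := by
  obtain ⟨k, hk1, hkm, rfl⟩ := exists_bx_eq hsum hbx hp
  have hIco : {j ∈ Icc 1 m | T (bx j) < T (bx k)} = Ico 1 k := by
    ext j
    simp only [mem_filter, mem_Icc, mem_Ico, (hbx k hk1 hkm).2]
    constructor
    · rintro ⟨⟨hj1, hjm⟩, hjk⟩
      rw [(hbx j hj1 hjm).2] at hjk
      exact ⟨hj1, hjk⟩
    · rintro ⟨hj1, hjk⟩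
      exact ⟨⟨hj1, by omega⟩, by rw [(hbx j hj1 (by omega)).2]; exact hjk⟩
  rw [← image_Icc_eq_boxes hsum hbx, filter_image, hIco,
    card_image_of_injOn ((injOn_Icc_of_leftInverse hbx).mono (by simp [Set.subset_def]; omega)),
    Nat.card_Ico, (hbx k hk1 hkm).2]

include hdec hT hbx in
lemma row_succ_le_and_col_lt {k : ℕ} (hk : 1 ≤ k) (hkm : k + 1 ≤ m)
    (hnd : k ∉ descentSet m bx) : (bx (k + 1)).1 ≤ (bx k).1 ∧ (bx k).2 < (bx (k + 1)).2 := by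
  have hrow : (bx (k + 1)).1 ≤ (bx k).1 := by
    simp only [descentSet, mem_filter, mem_Ioo, not_and, not_lt] at hnd
    exact hnd ⟨hk, by omega⟩
  refine ⟨hrow, not_le.1 fun hcol => ?_⟩
  have := hT.le_of_le hdec (hbx (k + 1) (by omega) hkm).1 (hbx k hk (by omega)).1 hrow hcol
  rw [(hbx (k + 1) (by omega) hkm).2, (hbx k hk (by omega)).2] at this
  omega

include hdec hT hbx in
lemma row_le_and_col_lt_of_not_exists_descent {a b : ℕ} (ha : 1 ≤ a) (hab : a < b)
    (hbm : b ≤ m) (hno : ¬∃ d ∈ descentSet m bx, a ≤ d ∧ d < b) :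
    (bx b).1 ≤ (bx a).1 ∧ (bx a).2 < (bx b).2 := by
  induction b, hab using Nat.le_induction with
  | base => exact row_succ_le_and_col_lt hdec hT hbx ha hbm fun hd => hno ⟨a, hd, le_rfl, by omega⟩
  | succ b hab ih =>
    obtain ⟨hrow, hcol⟩ := ih (by omega) fun ⟨d, hd, had, hdb⟩ => hno ⟨d, hd, had, by omega⟩
    obtain ⟨hrow', hcol'⟩ := row_succ_le_and_col_lt hdec hT hbx (by omega) hbm
      fun hd => hno ⟨b, hd, by omega, by omega⟩
    exact ⟨hrow'.trans hrow, hcol.trans hcol'⟩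

end StandardTableau

section Standardization

variable {lam : List ℕ} {f : ℕ × ℕ → ℕ}

/-- Standardization numbers the boxes in the lexicographic order of (entry, column). -/
def stdKey (f : ℕ × ℕ → ℕ) (p : ℕ × ℕ) : ℕ ×ₗ ℕ := toLex (f p, p.2)

lemma standardization_eq_card_add_one (p : ℕ × ℕ) :
    standardization lam f p = #{q ∈ boxes lam | stdKey f q < stdKey f p} + 1 := by
  simp only [standardization, stdKey, Prod.Lex.toLex_lt_toLex]

lemma standardization_lt_standardization {p q : ℕ × ℕ} (hq : q ∈ boxes lam)
    (h : stdKey f q < stdKey f p) : standardization lam f q < standardization lam f p := by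
  rw [standardization_eq_card_add_one, standardization_eq_card_add_one, add_lt_add_iff_right]
  refine card_lt_card ((ssubset_iff_of_subset fun x hx => ?_).2 ⟨q, ?_, ?_⟩)
  · rw [mem_filter] at hx ⊢
    exact ⟨hx.1, hx.2.trans h⟩
  · exact mem_filter.2 ⟨hq, h⟩
  · simp

end Standardization

section Characterization

variable {m : ℕ} {lam : List ℕ} {T : ℕ × ℕ → ℕ} {bx : ℕ → ℕ × ℕ} {f : ℕ × ℕ → ℕ}
  (hdec : lam.Pairwise (· ≥ ·)) (hsum : lam.sum = m) (hT : IsSSYT lam T)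
  (hbx : ∀ k, 1 ≤ k → k ≤ m → bx k ∈ boxes lam ∧ T (bx k) = k)

section Forward

variable (hstd : ∀ p ∈ boxes lam, standardization lam f p = T p)

include hbx hstd in
lemma stdKey_le_of_standardization_eq {a b : ℕ} (ha : 1 ≤ a) (hab : a ≤ b) (hbm : b ≤ m) :
    stdKey f (bx a) ≤ stdKey f (bx b) := by
  refine not_lt.1 fun h => ?_
  have := standardization_lt_standardization (hbx b (by omega) hbm).1 h
  rw [hstd _ (hbx b (by omega) hbm).1, hstd _ (hbx a ha (by omega)).1,
    (hbx b (by omega) hbm).2, (hbx a ha (by omega)).2] at this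
  omega

include hdec hbx hstd in
lemma lt_succ_of_standardization_eq (hf : IsSSYT lam f) {d : ℕ} (hd : d ∈ descentSet m bx) :
    f (bx d) < f (bx (d + 1)) := by
  simp only [descentSet, mem_filter, mem_Ioo] at hd
  obtain ⟨⟨hd0, hdm⟩, hrow⟩ := hd
  have key := stdKey_le_of_standardization_eq hbx hstd hd0 (Nat.le_succ d) hdm
  rw [stdKey, stdKey, Prod.Lex.toLex_le_toLex] at key
  rcases key with h | ⟨-, hcol⟩
  · exact h
  · exact hf.lt_of_lt_of_le hdec (hbx d hd0 hdm.le).1 (hbx (d + 1) (by omega) hdm).1 hrow hcol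

end Forward

section Backward

variable (hmono : ∀ a b, 1 ≤ a → a ≤ b → b ≤ m → f (bx a) ≤ f (bx b))
  (hstrict : ∀ a b, 1 ≤ a → b ≤ m → ∀ d ∈ descentSet m bx, a ≤ d → d < b → f (bx a) < f (bx b))

include hdec hT hbx hmono hstrict in
/-- Equal entries of `f` along a run of `T` without descents lie in strictly increasing
columns. -/
lemma stdKey_lt_of_lt {a b : ℕ} (ha : 1 ≤ a) (hab : a < b) (hbm : b ≤ m) :
    stdKey f (bx a) < stdKey f (bx b) := by
  rw [stdKey, stdKey, Prod.Lex.toLex_lt_toLex]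
  by_cases hdes : ∃ d ∈ descentSet m bx, a ≤ d ∧ d < b
  · obtain ⟨d, hd, had, hdb⟩ := hdes
    exact Or.inl (hstrict a b ha hbm d hd had hdb)
  · rcases (hmono a b ha hab.le hbm).lt_or_eq with h | h
    · exact Or.inl h
    · exact Or.inr ⟨h, (row_le_and_col_lt_of_not_exists_descent hdec hT hbx ha hab hbm hdes).2⟩

include hdec hsum hT hbx hmono hstrict in
lemma stdKey_lt_iff {p q : ℕ × ℕ} (hp : p ∈ boxes lam) (hq : q ∈ boxes lam) :
    stdKey f p < stdKey f q ↔ T p < T q := by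
  obtain ⟨a, ha1, ham, rfl⟩ := exists_bx_eq hsum hbx hp
  obtain ⟨b, hb1, hbm, rfl⟩ := exists_bx_eq hsum hbx hq
  rw [(hbx a ha1 ham).2, (hbx b hb1 hbm).2]
  rcases lt_trichotomy a b with h | rfl | h
  · simp [h, stdKey_lt_of_lt hdec hT hbx hmono hstrict ha1 h hbm]
  · simp
  · simp [h.not_gt, (stdKey_lt_of_lt hdec hT hbx hmono hstrict hb1 h ham).not_gt]

include hdec hsum hT hbx hmono hstrict in
lemma isSSYT_of_monotone (hpos : ∀ p ∈ boxes lam, 1 ≤ f p) : IsSSYT lam f where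
  pos := hpos
  row_weak p hp q hq h1 h2 := by
    obtain ⟨a, ha1, ham, rfl⟩ := exists_bx_eq hsum hbx hp
    obtain ⟨b, hb1, hbm, rfl⟩ := exists_bx_eq hsum hbx hq
    have hab := hT.row_weak _ hp _ hq h1 h2
    rw [(hbx a ha1 ham).2, (hbx b hb1 hbm).2] at hab
    exact hmono a b ha1 hab hbm
  col_strict p hp q hq h1 h2 := by
    obtain ⟨a, ha1, ham, rfl⟩ := exists_bx_eq hsum hbx hp
    obtain ⟨b, hb1, hbm, rfl⟩ := exists_bx_eq hsum hbx hq
    have hab := hT.col_strict _ hp _ hq h1 h2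
    rw [(hbx a ha1 ham).2, (hbx b hb1 hbm).2] at hab
    by_cases hdes : ∃ d ∈ descentSet m bx, a ≤ d ∧ d < b
    · obtain ⟨d, hd, had, hdb⟩ := hdes
      exact hstrict a b ha1 hbm d hd had hdb
    · exact absurd h2
        (row_le_and_col_lt_of_not_exists_descent hdec hT hbx ha1 hab hbm hdes).1.not_gt

include hdec hsum hT hbx hmono hstrict in
lemma standardization_eq_of_monotone {p : ℕ × ℕ} (hp : p ∈ boxes lam) :
    standardization lam f p = T p := by
  rw [standardization_eq_card_add_one,
    filter_congr fun x hx => stdKey_lt_iff hdec hsum hT hbx hmono hstrict hx hp,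
    card_filter_lt_T hsum hbx hp]
  obtain ⟨k, hk1, hkm, rfl⟩ := exists_bx_eq hsum hbx hp
  rw [(hbx k hk1 hkm).2]
  omega

end Backward

include hdec hsum hT hbx in
lemma isSSYT_and_standardization_eq_iff (hpos : ∀ p ∈ boxes lam, 1 ≤ f p) :
    (IsSSYT lam f ∧ ∀ p ∈ boxes lam, standardization lam f p = T p) ↔
      (∀ a b, 1 ≤ a → a ≤ b → b ≤ m → f (bx a) ≤ f (bx b)) ∧
      (∀ a b, 1 ≤ a → b ≤ m → ∀ d ∈ descentSet m bx, a ≤ d → d < b → f (bx a) < f (bx b)) := by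
  constructor
  · rintro ⟨hf, hstd⟩
    have hmono : ∀ a b, 1 ≤ a → a ≤ b → b ≤ m → f (bx a) ≤ f (bx b) := fun a b ha hab hbm =>
      (Prod.Lex.toLex_le_toLex.1 (stdKey_le_of_standardization_eq hbx hstd ha hab hbm)).elim
        le_of_lt (·.1.le)
    refine ⟨hmono, fun a b ha hbm d hd had hdb => ?_⟩
    calc f (bx a) ≤ f (bx d) := hmono a d ha had (by omega)
      _ < f (bx (d + 1)) := lt_succ_of_standardization_eq hdec hbx hstd hf hd
      _ ≤ f (bx b) := hmono (d + 1) b (by omega) hdb hbm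
  · rintro ⟨hmono, hstrict⟩
    exact ⟨isSSYT_of_monotone hdec hsum hT hbx hmono hstrict hpos,
      fun p hp => standardization_eq_of_monotone hdec hsum hT hbx hmono hstrict hp⟩

include hdec hT in
lemma isSSYT_extFill_and_standardization_eq_iff {n : ℕ} (S : {p // p ∈ boxes lam} → Fin n) :
    (IsSSYT lam (extFill lam S) ∧
        ∀ p ∈ boxes lam, standardization lam (extFill lam S) p = T p) ↔
      IsDescentCompatible (descentSet m bx) (S ∘ boxEquiv hsum hbx) := by
  have hfill : (fun k : Fin m => extFill lam S (bx (k + 1))) =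
      (fun v : Fin n => (v : ℕ) + 1) ∘ S ∘ boxEquiv hsum hbx := by
    funext k
    simp [extFill, boxEquiv, (hbx (k + 1) (by omega) (by omega)).1]
  rw [isSSYT_and_standardization_eq_iff hdec hsum hT hbx fun p hp => by simp [extFill, hp],
    ← isDescentCompatible_succ_iff, hfill,
    isDescentCompatible_comp_iff fun a b h => by simpa using h]

end Characterization

lemma sum_filter_prod_X_eq_of_equiv {ι κ R : Type*} [Fintype ι] [Fintype κ] [DecidableEq ι]
    [DecidableEq κ] [CommSemiring R] {n : ℕ} (e : ι ≃ κ) {P : (κ → Fin n) → Prop}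
    {Q : (ι → Fin n) → Prop} [DecidablePred P] [DecidablePred Q] (h : ∀ S, P S ↔ Q (S ∘ e)) :
    ∑ S ∈ univ.filter P, ∏ b, (X (S b) : MvPolynomial (Fin n) R) =
      ∑ u ∈ univ.filter Q, ∏ i, (X (u i) : MvPolynomial (Fin n) R) :=
  Finset.sum_equiv (e.arrowCongr (Equiv.refl _)).symm
    (fun S => by simp only [mem_filter, mem_univ, true_and, h]; rfl)
    fun S _ => (e.prod_comp fun b => X (S b)).symm

theorem quasisymmetric_expansion_of_standardization_class_general
    (m n : ℕ) (lam : List ℕ)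
    (hdec : List.Pairwise (· ≥ ·) lam) (hsum : lam.sum = m)
    (T : ℕ × ℕ → ℕ) (hT : IsSYT lam m T)
    (bx : ℕ → ℕ × ℕ)
    (hbx : ∀ k : ℕ, 1 ≤ k → k ≤ m → bx k ∈ boxes lam ∧ T (bx k) = k) :
    (∑ S ∈ Finset.univ.filter
        (fun S : {p // p ∈ boxes lam} → Fin n =>
          IsSSYT lam (extFill lam S) ∧
          ∀ p ∈ boxes lam, standardization lam (extFill lam S) p = T p),
      ∏ b : {p // p ∈ boxes lam}, (X (S b) : MvPolynomial (Fin n) ℤ))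
    =
    (∑ U ∈ Finset.univ.filter
        (fun U : {p // p ∈ boxes (compOfSet m
            ((Finset.Ioo 0 m).filter (fun k => (bx k).1 < (bx (k + 1)).1)))} → Fin n =>
          IsCompTabFn _ U),
      ∏ b, (X (U b) : MvPolynomial (Fin n) ℤ)) := by
  have hD : ∀ d ∈ descentSet m bx, d < m := fun d hd => (mem_Ioo.1 (mem_filter.1 hd).1).2
  exact (sum_filter_prod_X_eq_of_equiv (boxEquiv hsum hbx)
      (isSSYT_extFill_and_standardization_eq_iff hdec hsum hT.1 hbx)).trans
    (sum_filter_prod_X_eq_of_equiv (compBoxEquiv hD)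
      (isCompTabFn_iff_isDescentCompatible hD)).symm

theorem quasisymmetric_expansion_of_standardization_class
    (m n : ℕ) (hn : 0 < n) (lam : List ℕ)
    (hdec : List.Pairwise (· ≥ ·) lam) (hpos : ∀ x ∈ lam, 0 < x) (hsum : lam.sum = m)
    (T : ℕ × ℕ → ℕ) (hT : IsSYT lam m T)
    (bx : ℕ → ℕ × ℕ)
    (hbx : ∀ k : ℕ, 1 ≤ k → k ≤ m → bx k ∈ boxes lam ∧ T (bx k) = k) :
    (∑ S ∈ Finset.univ.filter
        (fun S : {p // p ∈ boxes lam} → Fin n =>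
          IsSSYT lam (extFill lam S) ∧
          ∀ p ∈ boxes lam, standardization lam (extFill lam S) p = T p),
      ∏ b : {p // p ∈ boxes lam}, (X (S b) : MvPolynomial (Fin n) ℤ))
    =
    (∑ U ∈ Finset.univ.filter
        (fun U : {p // p ∈ boxes (compOfSet m
            ((Finset.Ioo 0 m).filter (fun k => (bx k).1 < (bx (k + 1)).1)))} → Fin n =>
          IsCompTabFn _ U),
      ∏ b, (X (U b) : MvPolynomial (Fin n) ℤ)) :=
  quasisymmetric_expansion_of_standardization_class_general m n lam hdec hsum T hT bx hbx
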